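/- arXiv:2306.03007 — 3 statements merged into one kernel-verified Lean document; each statement's English description precedes it below -/
import Mathlib

section
/- Sufficient descent for random functional teaching: under Lipschitz smoothness of the loss (constant L_L) and bounded kernel (constant M_K), if the learner updates f^{t+1} = f^t − η^t · G(L; f^t; (x^t, y^t)) with step size η^t ≤ 1/(2 L_L M_K), then L(f^{t+1}) − L(f^t) ≤ −(η^t/2) · S_L(f^t; x^t), where S_L(f^t; x^t) = |E_{x^t}[∇_f L(f^t)]|² is the squared evaluation of the functional gradient at x^t. -/
open scoped RealInnerProductSpace

/-- Sufficient descent for Random Functional Teaching. In an RKHS with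
feature map `K` (so `K(x,x') = ⟪K x, K x'⟫` and `E_x[h] = ⟪h, K x⟫`), suppose the
convex loss functional `L` with Fréchet gradient `gradL` is `LL`-Lipschitz smooth in
the evaluation sense and the kernel is bounded by `MK`. If the learner updates
`f1 = f0 − η • (E_{x}[∇L(f0)] • K x)` with `0 < η ≤ 1/(2·LL·MK)`, then
`L f1 − L f0 ≤ −(η/2) · S_L(f0; x)` where `S_L(f0; x) = (E_x[∇L(f0)])²`. -/
theorem sufficient_descent_RFT
    {X H : Type*} [NormedAddCommGroup H] [InnerProductSpace ℝ H]
    (K : X → H) (L : H → ℝ) (gradL : H → H) (LL MK : ℝ)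
    (hLL : 0 ≤ LL) (hMK : 0 ≤ MK)
    (hconv : ∀ f g : H, L g - L f ≤ ⟪g - f, gradL g⟫)
    (hLip : ∀ (f f' : H) (x : X),
      |⟪gradL f, K x⟫ - ⟪gradL f', K x⟫| ≤ LL * |⟪f, K x⟫ - ⟪f', K x⟫|)
    (hK : ∀ x x' : X, ⟪K x, K x'⟫ ≤ MK)
    (η : ℝ) (hη : 0 < η) (hηle : η ≤ 1 / (2 * LL * MK))
    (f0 : H) (x : X) (f1 : H)
    (hupd : f1 = f0 - η • (⟪gradL f0, K x⟫ • K x)) :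
    L f1 - L f0 ≤ -(η / 2) * ⟪gradL f0, K x⟫ ^ 2 := by
  set g : ℝ := ⟪gradL f0, K x⟫ with hg
  set g1 : ℝ := ⟪gradL f1, K x⟫ with hg1
  -- handle degenerate case LL * MK = 0 using η > 0 hypothesis
  have hLM : 0 < LL * MK ∨ L f1 - L f0 ≤ -(η / 2) * g ^ 2 := by
    rcases lt_or_eq_of_le (mul_nonneg hLL hMK) with h | h
    · exact Or.inl h
    · exfalso
      have : (1 : ℝ) / (2 * LL * MK) = 0 := by
        rw [mul_assoc, ← h]; simp
      linarith [hηle, hη, this ▸ hηle]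
  rcases hLM with hLM | done
  swap
  · exact done
  -- η * (LL * MK) ≤ 1/2
  have hhalf : η * (LL * MK) ≤ 1 / 2 := by
    have h2 : (0:ℝ) < 2 * LL * MK := by nlinarith
    have h3 : η * (2 * LL * MK) ≤ 1 := (le_div_iff₀ h2).mp hηle
    nlinarith
  -- key computations
  have hKK : (0:ℝ) ≤ ⟪K x, K x⟫ := real_inner_self_nonneg
  have hKM : ⟪K x, K x⟫ ≤ MK := hK x x
  have hdiff : f1 - f0 = (-(η * g)) • K x := by
    rw [hupd]; module
  have hconv' : L f1 - L f0 ≤ -(η * g) * g1 := by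
    have := hconv f0 f1
    rwa [hdiff, real_inner_smul_left, real_inner_comm] at this
  have hlip' : |g1 - g| ≤ LL * (η * |g| * ⟪K x, K x⟫) := by
    have h := hLip f1 f0 x
    have hfd : ⟪f1, K x⟫ - ⟪f0, K x⟫ = -(η * g) * ⟪K x, K x⟫ := by
      rw [← inner_sub_left, hdiff, real_inner_smul_left]
    rw [hfd] at h
    calc |g1 - g| ≤ LL * |(-(η * g)) * ⟪K x, K x⟫| := h
      _ = LL * (η * |g| * ⟪K x, K x⟫) := by
          rw [abs_mul, abs_neg, abs_mul, abs_of_pos hη, abs_of_nonneg hKK]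
  have hlip'' : |g1 - g| ≤ LL * MK * η * |g| := by
    calc |g1 - g| ≤ LL * (η * |g| * ⟪K x, K x⟫) := hlip'
      _ ≤ LL * MK * η * |g| := by
          have h5 := mul_le_mul_of_nonneg_left hKM
            (show (0:ℝ) ≤ LL * η * |g| by positivity)
          nlinarith [h5]
  -- conclude
  have key : -(η * g) * g1 ≤ -(η / 2) * g ^ 2 := by
    have h1 : -(η * g) * g1 = -(η * g ^ 2) + (-(η * g)) * (g1 - g) := by ring
    have h2 : (-(η * g)) * (g1 - g) ≤ η * |g| * |g1 - g| := by
      calc (-(η * g)) * (g1 - g) ≤ |(-(η * g)) * (g1 - g)| := le_abs_self _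
        _ = η * |g| * |g1 - g| := by
            rw [abs_mul, abs_neg, abs_mul, abs_of_pos hη]
    have h3 : η * |g| * |g1 - g| ≤ η * |g| * (LL * MK * η * |g|) := by
      have : 0 ≤ η * |g| := by positivity
      exact mul_le_mul_of_nonneg_left hlip'' this
    have h4 : η * |g| * (LL * MK * η * |g|) ≤ (η / 2) * g ^ 2 := by
      have hgg : |g| * |g| = g ^ 2 := by rw [abs_mul_abs_self, sq]
      have h5 := mul_le_mul_of_nonneg_right hhalf
        (show (0:ℝ) ≤ η * g ^ 2 by positivity)
      have h6 : η * |g| * (LL * MK * η * |g|) = η * (LL * MK) * (η * (|g| * |g|)) := by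
        ring
      rw [h6, hgg]; linarith
    nlinarith
  linarith [hconv', key]
end

section
/- Sufficient descent for greedy functional teaching: under the same smoothness and bounded-kernel assumptions with η^t ≤ 1/(2 L_L M_K), if x^{t*} maximizes |E_x[∇_f L(f^t)]| over x ∈ X, then L(f^{t+1}) − L(f^t) ≤ −(η^t/2)·S_L(f^t; x^{t*}) ≤ −(η^t/2)·S_L(f^t; x^t) for any x^t ∈ X, where f^{t+1} is obtained by a gradient step at x^{t*}. -/
open scoped RealInnerProductSpace

/-- Sufficient descent for Greedy Functional Teaching. Under the same
smoothness and bounded-kernel assumptions with `0 < η ≤ 1/(2·LL·MK)`, if `xstar`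
maximizes `|E_x[∇L(f0)]|` over `x ∈ X` and the learner takes a gradient step at
`xstar`, i.e. `f1 = f0 − η • (E_{xstar}[∇L(f0)] • K xstar)`, then for any `x ∈ X`,
`L f1 − L f0 ≤ −(η/2)·S_L(f0; xstar) ≤ −(η/2)·S_L(f0; x)`. -/
theorem sufficient_descent_GFT
    {X H : Type*} [NormedAddCommGroup H] [InnerProductSpace ℝ H]
    (K : X → H) (L : H → ℝ) (gradL : H → H) (LL MK : ℝ)
    (hLL : 0 ≤ LL) (hMK : 0 ≤ MK)
    (hconv : ∀ f g : H, L g - L f ≤ ⟪g - f, gradL g⟫)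
    (hLip : ∀ (f f' : H) (x : X),
      |⟪gradL f, K x⟫ - ⟪gradL f', K x⟫| ≤ LL * |⟪f, K x⟫ - ⟪f', K x⟫|)
    (hK : ∀ x x' : X, ⟪K x, K x'⟫ ≤ MK)
    (η : ℝ) (hη : 0 < η) (hηle : η ≤ 1 / (2 * LL * MK))
    (f0 : H) (xstar : X)
    (hmax : ∀ x : X, |⟪gradL f0, K x⟫| ≤ |⟪gradL f0, K xstar⟫|)
    (f1 : H) (hupd : f1 = f0 - η • (⟪gradL f0, K xstar⟫ • K xstar)) :
    ∀ x : X,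
      L f1 - L f0 ≤ -(η / 2) * ⟪gradL f0, K xstar⟫ ^ 2 ∧
      -(η / 2) * ⟪gradL f0, K xstar⟫ ^ 2 ≤ -(η / 2) * ⟪gradL f0, K x⟫ ^ 2 := by

  intro x
  set g := ⟪gradL f0, K xstar⟫ with hg
  set a := ⟪gradL f1, K xstar⟫ with ha
  have hKs : (0:ℝ) ≤ ⟪K xstar, K xstar⟫ := real_inner_self_nonneg
  have hKM : ⟪K xstar, K xstar⟫ ≤ MK := hK xstar xstar
  -- key: η * (LL * MK) ≤ 1/2
  have hkey : η * (LL * MK) ≤ 1/2 := by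
    rcases eq_or_lt_of_le (mul_nonneg hLL hMK) with h0 | h0
    · rw [← h0]; norm_num
    · have h2 : 0 < 2 * LL * MK := by nlinarith
      rw [le_div_iff₀ h2] at hηle
      nlinarith
  -- inner product computations
  have hsub : f1 - f0 = -(η • (g • K xstar)) := by rw [hupd]; abel
  have hin1 : ⟪f1 - f0, gradL f1⟫ = -(η * g * a) := by
    rw [hsub, inner_neg_left, inner_smul_left, inner_smul_left, real_inner_comm]
    simp [ha]; ring
  have hin2 : ⟪f1, K xstar⟫ - ⟪f0, K xstar⟫ = -(η * g * ⟪K xstar, K xstar⟫) := by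
    rw [← inner_sub_left, hsub, inner_neg_left, inner_smul_left, inner_smul_left]
    simp; ring
  have hdiff : |a - g| ≤ LL * (η * |g| * ⟪K xstar, K xstar⟫) := by
    have := hLip f1 f0 xstar
    rw [hin2] at this
    calc |a - g| ≤ LL * |-(η * g * ⟪K xstar, K xstar⟫)| := this
      _ = LL * (η * |g| * ⟪K xstar, K xstar⟫) := by
          rw [abs_neg, abs_mul, abs_mul, abs_of_pos hη, abs_of_nonneg hKs]
  have habs : |a - g| ≤ LL * MK * η * |g| := by
    calc |a - g| ≤ LL * (η * |g| * ⟪K xstar, K xstar⟫) := hdiff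
      _ ≤ LL * MK * η * |g| := by nlinarith [abs_nonneg g, mul_nonneg (mul_nonneg hLL hη.le) (abs_nonneg g)]
  have hgg : |g| * |g| = g * g := by rw [← abs_mul, abs_mul_self]
  have h1 : L f1 - L f0 ≤ -(η / 2) * g ^ 2 := by
    have hc := hconv f0 f1
    rw [hin1] at hc
    have h2 : g * a ≥ g * g / 2 := by
      have : g * (a - g) ≥ -(|g| * |a - g|) := neg_abs_le (g * (a - g)) |>.trans_eq' (by rw [abs_mul])
      nlinarith [abs_nonneg g, mul_le_mul_of_nonneg_left habs (abs_nonneg g)]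
    nlinarith
  refine ⟨h1, ?_⟩
  have hx := hmax x
  have hx2 : ⟪gradL f0, K x⟫ ^ 2 ≤ g ^ 2 := by
    calc ⟪gradL f0, K x⟫ ^ 2 = |⟪gradL f0, K x⟫| ^ 2 := (sq_abs _).symm
      _ ≤ |g| ^ 2 := pow_le_pow_left₀ (abs_nonneg _) hx 2
      _ = g ^ 2 := sq_abs g
  nlinarith
end

section
/- Convergence rate of greedy functional teaching: suppose for each iteration j, L(f^{j+1}) − L(f^j) ≤ −(η^j/2) S_L(f^j; x^{j*}) with η^j ≥ η̃ > 0, and define the greedy ratio γ^j = S_L(f^j; x^j)/S_L(f^j; x^{j*}) ∈ (0,1] and ψ(t) = Σ_{j=0}^{t−1} γ^j. If additionally the per-iteration descent satisfies γ^j S_L(f^j; x^{j*}) ≤ 2(L(f^j)−L(f^{j+1}))/η^j, then min_{0 ≤ j ≤ t−1} S_L(f^j; x^{j*}) ≤ 2 L(f^0)/(η̃ ψ(t)). -/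
open scoped RealInnerProductSpace

/-- Convergence rate of Greedy Functional Teaching. Suppose per-iteration
descent `L(f^{j+1}) − L(f^j) ≤ −(η^j/2)·S_L(f^j; x^{j*})` holds with `η^j ≥ η̃ > 0`,
where `x^{j*}` is the greedy example (so `S_L(f^j; x^j) ≤ S_L(f^j; x^{j*})` for the
random examples `x^j`, and before convergence `0 < S_L(f^j; x^j)`). With the greedy
ratio `γ^j = S_L(f^j; x^j)/S_L(f^j; x^{j*}) ∈ (0,1]` and `ψ(t) = Σ_{j<t} γ^j`, if
additionally `γ^j·S_L(f^j; x^{j*}) ≤ 2(L(f^j) − L(f^{j+1}))/η^j`, then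
`min_{0 ≤ j ≤ t−1} S_L(f^j; x^{j*}) ≤ 2·L(f^0)/(η̃·ψ(t))`.
Here `S_L(f; x) = ⟪gradL f, K x⟫²`. -/
theorem convergence_GFT
    {X H : Type*} [NormedAddCommGroup H] [InnerProductSpace ℝ H]
    (K : X → H) (L : H → ℝ) (gradL : H → H)
    (f : ℕ → H) (x xstar : ℕ → X) (η : ℕ → ℝ) (ηtilde : ℝ)
    (hηtilde : 0 < ηtilde) (hη : ∀ j, ηtilde ≤ η j)
    (hLnn : ∀ g : H, 0 ≤ L g)
    (hpos : ∀ j, 0 < ⟪gradL (f j), K (x j)⟫ ^ 2)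
    (hle : ∀ j, ⟪gradL (f j), K (x j)⟫ ^ 2 ≤ ⟪gradL (f j), K (xstar j)⟫ ^ 2)
    (hdesc : ∀ j, L (f (j + 1)) - L (f j) ≤
      -(η j / 2) * ⟪gradL (f j), K (xstar j)⟫ ^ 2)
    (hratio : ∀ j,
      (⟪gradL (f j), K (x j)⟫ ^ 2 / ⟪gradL (f j), K (xstar j)⟫ ^ 2) *
          ⟪gradL (f j), K (xstar j)⟫ ^ 2 ≤
        2 * (L (f j) - L (f (j + 1))) / η j)
    (t : ℕ) (ht : 0 < t) :
    (Finset.range t).inf' ⟨0, Finset.mem_range.mpr ht⟩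
        (fun j => ⟪gradL (f j), K (xstar j)⟫ ^ 2) ≤
      2 * L (f 0) / (ηtilde *
        ∑ j ∈ Finset.range t,
          ⟪gradL (f j), K (x j)⟫ ^ 2 / ⟪gradL (f j), K (xstar j)⟫ ^ 2) := by
  set S : ℕ → ℝ := fun j => ⟪gradL (f j), K (xstar j)⟫ ^ 2 with hSdef
  set γ : ℕ → ℝ := fun j => ⟪gradL (f j), K (x j)⟫ ^ 2 / S j with hγdef
  have hSpos : ∀ j, 0 < S j := fun j => lt_of_lt_of_le (hpos j) (hle j)
  have hγpos : ∀ j, 0 < γ j := fun j => div_pos (hpos j) (hSpos j)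
  have hψpos : 0 < ∑ j ∈ Finset.range t, γ j :=
    Finset.sum_pos (fun j _ => hγpos j) ⟨0, Finset.mem_range.mpr ht⟩
  set m := (Finset.range t).inf' ⟨0, Finset.mem_range.mpr ht⟩ S with hmdef
  have hm_le : ∀ j ∈ Finset.range t, m ≤ S j := fun j hj => Finset.inf'_le _ hj
  have hΔ : ∀ j, 0 ≤ L (f j) - L (f (j + 1)) := by
    intro j
    have h1 := hdesc j
    have h2 := hSpos j
    have h3 := lt_of_lt_of_le hηtilde (hη j)
    nlinarith
  have key : ∀ j ∈ Finset.range t,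
      ηtilde * (γ j * m) ≤ 2 * (L (f j) - L (f (j + 1))) := by
    intro j hj
    have h1 : γ j * m ≤ γ j * S j :=
      mul_le_mul_of_nonneg_left (hm_le j hj) (hγpos j).le
    have h2 : γ j * S j ≤ 2 * (L (f j) - L (f (j + 1))) / η j := hratio j
    have hηj : 0 < η j := lt_of_lt_of_le hηtilde (hη j)
    have h3 : 2 * (L (f j) - L (f (j + 1))) / η j ≤
        2 * (L (f j) - L (f (j + 1))) / ηtilde :=
      div_le_div_of_nonneg_left (by linarith [hΔ j]) hηtilde (hη j)
    calc ηtilde * (γ j * m) ≤ ηtilde * (2 * (L (f j) - L (f (j + 1))) / ηtilde) :=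
          mul_le_mul_of_nonneg_left (le_trans h1 (le_trans h2 h3)) hηtilde.le
      _ = 2 * (L (f j) - L (f (j + 1))) := by field_simp
  have hsum : ηtilde * (∑ j ∈ Finset.range t, γ j) * m ≤ 2 * L (f 0) := by
    have h1 : ∑ j ∈ Finset.range t, ηtilde * (γ j * m) ≤
        ∑ j ∈ Finset.range t, 2 * (L (f j) - L (f (j + 1))) :=
      Finset.sum_le_sum key
    have h2 : ∑ j ∈ Finset.range t, 2 * (L (f j) - L (f (j + 1))) =
        2 * (L (f 0) - L (f t)) := by
      rw [← Finset.mul_sum, Finset.sum_range_sub' (fun j => L (f j))]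
    have h3 : ∑ j ∈ Finset.range t, ηtilde * (γ j * m) =
        ηtilde * (∑ j ∈ Finset.range t, γ j) * m := by
      simp [Finset.mul_sum, Finset.sum_mul, mul_assoc]
    have := hLnn (f t)
    rw [h3, h2] at h1
    linarith
  rw [le_div_iff₀ (by positivity)]
  calc m * (ηtilde * ∑ j ∈ Finset.range t, γ j)
      = ηtilde * (∑ j ∈ Finset.range t, γ j) * m := by ring
    _ ≤ 2 * L (f 0) := hsum
end
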